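/- arXiv:1612.01159 — 9 statements merged into one kernel-verified Lean document; each statement's English description precedes it below -/
import Mathlib

section
/- Let X be a finite set with |X| >= 2, let N >= 1, and let P be a probability mass function on X^N with P(x) > 0 for every x in X^N. If LREP(P) > N*C for some real C > 0, then there exist outcomes x, x* in X^N that differ in exactly one coordinate such that log(P(x)/P(x*)) > C. (Theorem 1(i)) -/
/-- The log-ratio of extremal probabilities of a positive function on a finite nonempty type. -/
noncomputable def LREP {S : Type*} [Fintype S] [Nonempty S] (P : S → ℝ) : ℝ :=
  Real.log (Finset.univ.sup' Finset.univ_nonempty P / Finset.univ.inf' Finset.univ_nonempty P)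

/-- Theorem 1(i): if LREP(P) > N*C then some one-coordinate change shifts log-probability
by more than C. -/
theorem theorem1_i {X : Type*} [Fintype X] [Nonempty X] (hX : 2 ≤ Fintype.card X)
    {N : ℕ} (hN : 1 ≤ N) (P : (Fin N → X) → ℝ)
    (hpos : ∀ x, 0 < P x) (hsum : ∑ x, P x = 1)
    {C : ℝ} (hC : 0 < C) (hLREP : LREP P > (N : ℝ) * C) :
    ∃ x xs : Fin N → X,
      (∃ i : Fin N, x i ≠ xs i ∧ ∀ j : Fin N, j ≠ i → x j = xs j) ∧
        Real.log (P x / P xs) > C := by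
  obtain ⟨a, -, ha⟩ := Finset.exists_mem_eq_sup' (Finset.univ_nonempty) P
  obtain ⟨b, -, hb⟩ := Finset.exists_mem_eq_inf' (Finset.univ_nonempty) P
  -- hybrid path
  set z : ℕ → (Fin N → X) := fun k j => if (j : ℕ) < k then a j else b j with hz
  have hz0 : z 0 = b := by funext j; simp [hz]
  have hzN : z N = a := by funext j; simp [hz, j.isLt]
  have htel : ∑ k ∈ Finset.range N, (Real.log (P (z (k + 1))) - Real.log (P (z k)))
      = Real.log (P a) - Real.log (P b) := by
    rw [Finset.sum_range_sub (fun k => Real.log (P (z k))), hz0, hzN]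
  have hgt : (N : ℝ) * C < Real.log (P a) - Real.log (P b) := by
    have := hLREP
    rw [LREP, ha, hb, Real.log_div (ne_of_gt (hpos a)) (ne_of_gt (hpos b))] at this
    exact this
  have hex : ∃ k ∈ Finset.range N,
      C < Real.log (P (z (k + 1))) - Real.log (P (z k)) := by
    by_contra h
    push_neg at h
    have hle : ∑ k ∈ Finset.range N, (Real.log (P (z (k + 1))) - Real.log (P (z k)))
        ≤ ∑ _k ∈ Finset.range N, C := Finset.sum_le_sum fun k hk => h k hk
    rw [htel, Finset.sum_const, Finset.card_range, nsmul_eq_mul] at hle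
    linarith
  obtain ⟨k, hk, hkC⟩ := hex
  rw [Finset.mem_range] at hk
  refine ⟨z (k + 1), z k, ⟨⟨k, hk⟩, ?_, ?_⟩, ?_⟩
  · -- coordinates differ at i
    intro heq
    have : z (k + 1) = z k := by
      funext j
      by_cases hjk : (j : ℕ) = k
      · have hj : j = (⟨k, hk⟩ : Fin N) := Fin.ext hjk
        simp only [hz]
        subst hj
        simp only [lt_add_iff_pos_right, Nat.lt_irrefl, if_true, zero_lt_one, lt_self_iff_false,
          if_false]
        simpa [hz, Nat.lt_irrefl] using heq
      · simp only [hz]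
        rcases Nat.lt_or_ge (j : ℕ) k with h' | h'
        · simp [h', Nat.lt_succ_of_lt h']
        · have h'' : ¬ (j : ℕ) < k + 1 := by omega
          simp [h'', Nat.not_lt.mpr h']
    rw [this] at hkC
    linarith
  · intro j hj
    have hjk : (j : ℕ) ≠ k := fun h => hj (Fin.ext h)
    simp only [hz]
    rcases Nat.lt_or_ge (j : ℕ) k with h' | h'
    · simp [h', Nat.lt_succ_of_lt h']
    · have h'' : ¬ (j : ℕ) < k + 1 := by omega
      simp [h'', Nat.not_lt.mpr h']
  · rw [Real.log_div (ne_of_gt (hpos _)) (ne_of_gt (hpos _))]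
    exact hkC
end

section
/- Let X be a fixed finite set and let P_N, N >= 1, be an S-unstable FOES model sequence on X^N. Then for every epsilon with 0 < epsilon < 1, the probability P_N(M_{epsilon,N}) of the epsilon-modal set converges to 1 as N tends to infinity. (Theorem 2) -/
open scoped Classical in
/-- The ε-modal set of a model `P` on `Fin N → X`. -/
noncomputable def modalSet {X : Type*} [Fintype X] [Nonempty X] {N : ℕ}
    (P : (Fin N → X) → ℝ) (ε : ℝ) : Finset (Fin N → X) :=
  Finset.univ.filter fun x =>
    Real.log (P x) >
      (1 - ε) * Finset.univ.sup' Finset.univ_nonempty (fun y => Real.log (P y)) +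
        ε * Finset.univ.inf' Finset.univ_nonempty (fun y => Real.log (P y))

/-!
Let `M ≤ 0` and `m` be the largest and smallest log-probabilities of `P_N`, so that
`LREP (P_N) = M - m`. Outside the ε-modal set every configuration has log-probability at most
`(1 - ε) M + ε m = M - ε LREP (P_N) ≤ -ε LREP (P_N)`, and there are at most `|X| ^ N` of them.
Their total mass is therefore at most `exp (N (log |X| - ε LREP (P_N) / N))`, which tends to `0`
by S-instability.
-/

open Finset Filter Real Topology

section Extremal

variable {S : Type*} [Fintype S] [Nonempty S] {P : S → ℝ}

lemma log_sup'_of_pos (hP : ∀ x, 0 < P x) :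
    log (univ.sup' univ_nonempty P) = univ.sup' univ_nonempty fun x => log (P x) := by
  obtain ⟨x₀, -, hx₀⟩ := exists_mem_eq_sup' univ_nonempty P
  rw [hx₀]
  refine le_antisymm (le_sup' (fun x => log (P x)) (mem_univ x₀)) (sup'_le _ _ fun y _ => ?_)
  exact log_le_log (hP y) (hx₀ ▸ le_sup' P (mem_univ y))

lemma log_inf'_of_pos (hP : ∀ x, 0 < P x) :
    log (univ.inf' univ_nonempty P) = univ.inf' univ_nonempty fun x => log (P x) := by
  obtain ⟨x₀, -, hx₀⟩ := exists_mem_eq_inf' univ_nonempty P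
  rw [hx₀]
  refine le_antisymm (le_inf' _ _ fun y _ => ?_) (inf'_le (fun x => log (P x)) (mem_univ x₀))
  exact log_le_log (hP x₀) (hx₀ ▸ inf'_le P (mem_univ y))

lemma LREP_eq_sup'_log_sub_inf'_log (hP : ∀ x, 0 < P x) :
    LREP P = (univ.sup' univ_nonempty fun x => log (P x)) -
      univ.inf' univ_nonempty fun x => log (P x) := by
  have hsup : univ.sup' univ_nonempty P ≠ 0 :=
    ((hP (Classical.arbitrary S)).trans_le (le_sup' P (mem_univ _))).ne'
  have hinf : univ.inf' univ_nonempty P ≠ 0 :=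
    ((lt_inf'_iff univ_nonempty).2 fun y _ => hP y).ne'
  rw [LREP, log_div hsup hinf, log_sup'_of_pos hP, log_inf'_of_pos hP]

lemma sup'_log_nonpos (hP : ∀ x, 0 < P x) (hsum : ∑ x, P x ≤ 1) :
    (univ.sup' univ_nonempty fun x => log (P x)) ≤ 0 :=
  sup'_le _ _ fun y _ =>
    log_nonpos (hP y).le ((single_le_sum (fun x _ => (hP x).le) (mem_univ y)).trans hsum)

end Extremal

section ModalSet

variable {X : Type*} [Fintype X] [Nonempty X] {N : ℕ} {P : (Fin N → X) → ℝ}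

lemma le_exp_of_notMem_modalSet (hP : ∀ x, 0 < P x) {ε : ℝ} {x : Fin N → X}
    (hx : x ∉ modalSet P ε) :
    P x ≤ exp ((1 - ε) * (univ.sup' univ_nonempty fun y => log (P y)) +
      ε * univ.inf' univ_nonempty fun y => log (P y)) := by
  rw [← exp_log (hP x)]
  simp only [modalSet, mem_filter, mem_univ, true_and, gt_iff_lt, not_lt] at hx
  exact exp_le_exp.2 hx

lemma sum_compl_modalSet_le [DecidableEq X] (hP : ∀ x, 0 < P x) (hsum : ∑ x, P x = 1) (ε : ℝ) :
    ∑ x ∈ (modalSet P ε)ᶜ, P x ≤ (Fintype.card X : ℝ) ^ N * exp (-(ε * LREP P)) := by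
  have hbound : ∀ x ∈ (modalSet P ε)ᶜ, P x ≤ exp (-(ε * LREP P)) := fun x hx => by
    refine (le_exp_of_notMem_modalSet hP (mem_compl.1 hx)).trans (exp_le_exp.2 ?_)
    rw [LREP_eq_sup'_log_sub_inf'_log hP]
    linarith [sup'_log_nonpos hP hsum.le]
  calc ∑ x ∈ (modalSet P ε)ᶜ, P x ≤ #(modalSet P ε)ᶜ • exp (-(ε * LREP P)) :=
        sum_le_card_nsmul _ _ _ hbound
    _ ≤ (Fintype.card (Fin N → X) : ℝ) * exp (-(ε * LREP P)) := by
        rw [nsmul_eq_mul]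
        gcongr
        exact card_le_univ _
    _ = (Fintype.card X : ℝ) ^ N * exp (-(ε * LREP P)) := by simp

end ModalSet

lemma tendsto_pow_mul_exp_neg_mul_nhds_zero {c ε : ℝ} (hc : 0 < c) (hε : 0 < ε) {L : ℕ → ℝ}
    (hL : Tendsto (fun N => L N / N) atTop atTop) :
    Tendsto (fun N => c ^ N * exp (-(ε * L N))) atTop (𝓝 0) := by
  have hexponent : Tendsto (fun N : ℕ => (N : ℝ) * (log c - ε * (L N / N))) atTop atBot :=
    tendsto_natCast_atTop_atTop.atTop_mul_atBot₀ <|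
      tendsto_atBot_add_const_left _ _ (tendsto_neg_atTop_atBot.comp (hL.const_mul_atTop hε))
  refine (tendsto_exp_atBot.comp hexponent).congr' ?_
  filter_upwards [eventually_ne_atTop 0] with N hN
  rw [Function.comp_apply, ← rpow_natCast, rpow_def_of_pos hc, ← exp_add]
  congr 1
  field_simp
  ring

theorem theorem2_general {X : Type*} [Fintype X] [Nonempty X]
    (P : ∀ N : ℕ, (Fin N → X) → ℝ)
    (hpos : ∀ N : ℕ, 1 ≤ N → ∀ x, 0 < P N x)
    (hsum : ∀ N : ℕ, 1 ≤ N → ∑ x, P N x = 1)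
    (hunstable : Filter.Tendsto (fun N : ℕ => LREP (P N) / (N : ℝ))
      Filter.atTop Filter.atTop)
    {ε : ℝ} (hε0 : 0 < ε) :
    Filter.Tendsto (fun N : ℕ => ∑ x ∈ modalSet (P N) ε, P N x)
      Filter.atTop (nhds 1) := by
  classical
  have hcompl : Tendsto (fun N => ∑ x ∈ (modalSet (P N) ε)ᶜ, P N x) atTop (𝓝 0) := by
    refine squeeze_zero' ?_ ?_ (tendsto_pow_mul_exp_neg_mul_nhds_zero
      (Nat.cast_pos.2 (Fintype.card_pos (α := X))) hε0 hunstable)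
    · filter_upwards [eventually_ge_atTop 1] with N hN
      exact sum_nonneg fun x _ => (hpos N hN x).le
    · filter_upwards [eventually_ge_atTop 1] with N hN
      exact sum_compl_modalSet_le (hpos N hN) (hsum N hN) ε
  have hsplit : (fun N => 1 - ∑ x ∈ (modalSet (P N) ε)ᶜ, P N x) =ᶠ[atTop]
      fun N => ∑ x ∈ modalSet (P N) ε, P N x := by
    filter_upwards [eventually_ge_atTop 1] with N hN
    rw [← hsum N hN, ← sum_compl_add_sum (modalSet (P N) ε)]
    ring
  simpa using (tendsto_const_nhds.sub hcompl).congr' hsplit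

/-- Theorem 2: an S-unstable FOES model sequence puts asymptotically all mass
on any ε-modal set. -/
theorem theorem2 {X : Type*} [Fintype X] [Nonempty X]
    (P : ∀ N : ℕ, (Fin N → X) → ℝ)
    (hpos : ∀ N : ℕ, 1 ≤ N → ∀ x, 0 < P N x)
    (hsum : ∀ N : ℕ, 1 ≤ N → ∑ x, P N x = 1)
    (hunstable : Filter.Tendsto (fun N : ℕ => LREP (P N) / (N : ℝ))
      Filter.atTop Filter.atTop)
    {ε : ℝ} (hε0 : 0 < ε) (hε1 : ε < 1) :
    Filter.Tendsto (fun N : ℕ => ∑ x ∈ modalSet (P N) ε, P N x)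
      Filter.atTop (nhds 1) :=
  theorem2_general P hpos hsum hunstable hε0
end

section
/- Let X be a fixed finite set and let P_N and Q_N, N >= 1, be two FOES model sequences on X^N satisfying condition PSR, with P_N S-unstable. Then for every epsilon with 0 < epsilon < 1, the Q_N-probability of the complement X^N \ M_{epsilon,N} of the epsilon-modal set of P_N converges to 1 as N tends to infinity. (Corollary 1(ii)) -/
open Filter Topology Real Finset

theorem Real.log_sup' {ι : Type*} {s : Finset ι} (hs : s.Nonempty) {f : ι → ℝ}
    (hf : ∀ i ∈ s, 0 < f i) : log (s.sup' hs f) = s.sup' hs fun i => log (f i) := by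
  obtain ⟨i, hi, hmax⟩ := exists_mem_eq_sup' hs f
  rw [hmax]
  exact le_antisymm (le_sup' (fun i => log (f i)) hi)
    (sup'_le _ _ fun j hj => log_le_log (hf j hj) (hmax ▸ le_sup' f hj))

theorem Real.log_inf' {ι : Type*} {s : Finset ι} (hs : s.Nonempty) {f : ι → ℝ}
    (hf : ∀ i ∈ s, 0 < f i) : log (s.inf' hs f) = s.inf' hs fun i => log (f i) := by
  obtain ⟨i, hi, hmin⟩ := exists_mem_eq_inf' hs f
  rw [hmin]
  exact le_antisymm (le_inf' _ _ fun j hj => log_le_log (hf i hi) (hmin ▸ inf'_le f hj))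
    (inf'_le (fun i => log (f i)) hi)

section FiniteModel

variable {S : Type*} [Fintype S] [Nonempty S] {P Q : S → ℝ}

theorem le_inf'_div_of_mul_eq (hP : ∀ x, 0 < P x) (hQ : ∀ x, Q x ≤ 1)
    (hPQ : ∀ x y, P x * Q x = P y * Q y) (x : S) :
    Q x ≤ univ.inf' univ_nonempty P / P x := by
  obtain ⟨b, -, hb⟩ := exists_mem_eq_inf' univ_nonempty P
  rw [hb, le_div_iff₀ (hP x), mul_comm, hPQ x b]
  simpa using mul_le_mul_of_nonneg_left (hQ b) (hP b).le

theorem inf'_div_lt_exp_of_log_gt (hP : ∀ x, 0 < P x) {ε : ℝ} {x : S}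
    (hx : log (P x) > (1 - ε) * univ.sup' univ_nonempty (fun y => log (P y)) +
      ε * univ.inf' univ_nonempty (fun y => log (P y))) :
    univ.inf' univ_nonempty P / P x < exp (-((1 - ε) * LREP P)) := by
  have hinf : 0 < univ.inf' univ_nonempty P := (lt_inf'_iff _).2 fun y _ => hP y
  have hsup : 0 < univ.sup' univ_nonempty P := (hP x).trans_le (le_sup' P (mem_univ x))
  rw [← log_sup' _ fun y _ => hP y, ← log_inf' _ fun y _ => hP y] at hx
  rw [← log_lt_iff_lt_exp (div_pos hinf (hP x)), LREP, log_div hsup.ne' hinf.ne',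
    log_div hinf.ne' (hP x).ne']
  linarith

end FiniteModel

theorem sum_modalSet_le {X : Type*} [Fintype X] [Nonempty X] {N : ℕ}
    {P Q : (Fin N → X) → ℝ} (hP : ∀ x, 0 < P x) (hQ : ∀ x, 0 ≤ Q x) (hQsum : ∑ x, Q x = 1)
    (hPQ : ∀ x y, P x * Q x = P y * Q y) (ε : ℝ) :
    ∑ x ∈ modalSet P ε, Q x ≤ (Fintype.card X : ℝ) ^ N * exp (-((1 - ε) * LREP P)) := by
  have hQ_le_one (x) : Q x ≤ 1 :=
    hQsum ▸ single_le_sum (fun y _ => hQ y) (mem_univ x)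
  have hbound : ∀ x ∈ modalSet P ε, Q x ≤ exp (-((1 - ε) * LREP P)) := fun x hx =>
    (le_inf'_div_of_mul_eq hP hQ_le_one hPQ x).trans
      (inf'_div_lt_exp_of_log_gt hP (mem_filter.1 hx).2).le
  have hcard : ((modalSet P ε).card : ℝ) ≤ (Fintype.card X : ℝ) ^ N := by
    exact_mod_cast (card_le_univ _).trans_eq (by simp)
  calc ∑ x ∈ modalSet P ε, Q x ≤ (modalSet P ε).card • exp (-((1 - ε) * LREP P)) :=
        sum_le_card_nsmul _ _ _ hbound
    _ ≤ (Fintype.card X : ℝ) ^ N * exp (-((1 - ε) * LREP P)) := by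
        rw [nsmul_eq_mul]; gcongr

theorem tendsto_pow_mul_exp_neg_of_tendsto_div {u : ℕ → ℝ}
    (hu : Tendsto (fun N => u N / N) atTop atTop) {c : ℝ} (hc : 0 < c) :
    Tendsto (fun N => c ^ N * exp (-u N)) atTop (𝓝 0) := by
  have hlin : Tendsto (fun N : ℕ => N * (log c - u N / N)) atTop atBot :=
    tendsto_natCast_atTop_atTop.atTop_mul_atBot₀
      (tendsto_atBot_add_const_left _ _ (tendsto_neg_atTop_atBot.comp hu))
  refine (tendsto_exp_atBot.comp hlin).congr' ?_
  filter_upwards [eventually_gt_atTop 0] with N hN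
  rw [Function.comp_apply, mul_sub, mul_div_cancel₀ _ (by positivity), exp_sub, exp_nat_mul,
    exp_log hc, exp_neg, div_eq_mul_inv]

open scoped Classical in
theorem corollary1_ii_general {X : Type*} [Fintype X] [Nonempty X]
    (P Q : ∀ N : ℕ, (Fin N → X) → ℝ)
    (hPpos : ∀ N : ℕ, 1 ≤ N → ∀ x, 0 < P N x)
    (hQpos : ∀ N : ℕ, 1 ≤ N → ∀ x, 0 < Q N x)
    (hQsum : ∀ N : ℕ, 1 ≤ N → ∑ x, Q N x = 1)
    (hPSR : ∀ N : ℕ, 1 ≤ N → ∀ x : Fin N → X,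
      P N x * Q N x =
        Finset.univ.sup' Finset.univ_nonempty (P N) *
          Finset.univ.inf' Finset.univ_nonempty (Q N))
    (hunstable : Filter.Tendsto (fun N : ℕ => LREP (P N) / (N : ℝ))
      Filter.atTop Filter.atTop)
    {ε : ℝ} (hε1 : ε < 1) :
    Filter.Tendsto (fun N : ℕ => ∑ x ∈ (modalSet (P N) ε)ᶜ, Q N x)
      Filter.atTop (nhds 1) := by
  have hbound := tendsto_pow_mul_exp_neg_of_tendsto_div
    (u := fun N => (1 - ε) * LREP (P N))
    (by simpa only [mul_div_assoc] using hunstable.const_mul_atTop (sub_pos.2 hε1))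
    (c := Fintype.card X) (by exact_mod_cast Fintype.card_pos)
  have hmodal : Tendsto (fun N => ∑ x ∈ modalSet (P N) ε, Q N x) atTop (𝓝 0) := by
    refine squeeze_zero' ?_ ?_ hbound
    all_goals filter_upwards [eventually_ge_atTop 1] with N hN
    · exact sum_nonneg fun x _ => (hQpos N hN x).le
    · exact sum_modalSet_le (hPpos N hN) (fun x => (hQpos N hN x).le) (hQsum N hN)
        (fun x y => (hPSR N hN x).trans (hPSR N hN y).symm) ε
  have hcompl : Tendsto (fun N => 1 - ∑ x ∈ modalSet (P N) ε, Q N x) atTop (𝓝 1) := by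
    simpa using tendsto_const_nhds.sub hmodal
  refine hcompl.congr' ?_
  filter_upwards [eventually_ge_atTop 1] with N hN
  rw [← hQsum N hN, ← sum_add_sum_compl (modalSet (P N) ε), add_sub_cancel_left]

open scoped Classical in
/-- Corollary 1(ii): under condition PSR with `P` S-unstable, `Q` puts asymptotically all mass
on the complement of any ε-modal set of `P`. -/
theorem corollary1_ii {X : Type*} [Fintype X] [Nonempty X]
    (P Q : ∀ N : ℕ, (Fin N → X) → ℝ)
    (hPpos : ∀ N : ℕ, 1 ≤ N → ∀ x, 0 < P N x)
    (hPsum : ∀ N : ℕ, 1 ≤ N → ∑ x, P N x = 1)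
    (hQpos : ∀ N : ℕ, 1 ≤ N → ∀ x, 0 < Q N x)
    (hQsum : ∀ N : ℕ, 1 ≤ N → ∑ x, Q N x = 1)
    (hPSR : ∀ N : ℕ, 1 ≤ N → ∀ x : Fin N → X,
      P N x * Q N x =
        Finset.univ.sup' Finset.univ_nonempty (P N) *
          Finset.univ.inf' Finset.univ_nonempty (Q N))
    (hunstable : Filter.Tendsto (fun N : ℕ => LREP (P N) / (N : ℝ))
      Filter.atTop Filter.atTop)
    {ε : ℝ} (hε0 : 0 < ε) (hε1 : ε < 1) :
    Filter.Tendsto (fun N : ℕ => ∑ x ∈ (modalSet (P N) ε)ᶜ, Q N x)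
      Filter.atTop (nhds 1) :=
  corollary1_ii_general P Q hPpos hQpos hQsum hPSR hunstable hε1
end

section
/- Let X be a finite nonempty set, N >= 1, k >= 1, and let g_1, ..., g_k : X^N -> R be statistics and theta_1, ..., theta_k real parameters. Let P be the exponential model P(x) = exp( sum_{i=1}^k theta_i * g_i(x) ) / Z with Z = sum_{x in X^N} exp( sum_{i=1}^k theta_i * g_i(x) ). Then LREP(P) <= sum_{i=1}^k |theta_i| * (U_i - L_i), where U_i = max_{x in X^N} g_i(x) and L_i = min_{x in X^N} g_i(x). (key bound in the proof of Proposition 1) -/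
/-- Key bound in the proof of Proposition 1: for a linear exponential model with statistics
`g i` and parameters `θ i`, LREP is at most `∑ i, |θ i| * (U i - L i)`. -/
theorem prop1_bound {X : Type*} [Fintype X] [Nonempty X] {N k : ℕ} (hN : 1 ≤ N) (hk : 1 ≤ k)
    (g : Fin k → (Fin N → X) → ℝ) (θ : Fin k → ℝ) :
    LREP (fun x : Fin N → X =>
        Real.exp (∑ i, θ i * g i x) /
          ∑ y : Fin N → X, Real.exp (∑ i, θ i * g i y)) ≤
      ∑ i, |θ i| *
        (Finset.univ.sup' Finset.univ_nonempty (g i) -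
          Finset.univ.inf' Finset.univ_nonempty (g i)) := by
  classical
  set f : (Fin N → X) → ℝ := fun x => ∑ i, θ i * g i x with hf
  set Z : ℝ := ∑ y : Fin N → X, Real.exp (f y) with hZ
  have hZpos : 0 < Z := Finset.sum_pos (fun y _ => Real.exp_pos _) ⟨Classical.arbitrary _, Finset.mem_univ _⟩
  set P : (Fin N → X) → ℝ := fun x => Real.exp (f x) / Z with hP
  obtain ⟨a, -, ha⟩ := Finset.exists_mem_eq_sup' (Finset.univ_nonempty) P
  obtain ⟨b, -, hb⟩ := Finset.exists_mem_eq_inf' (Finset.univ_nonempty) P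
  have key : LREP P = f a - f b := by
    rw [LREP, ha, hb, hP]
    have : Real.exp (f a) / Z / (Real.exp (f b) / Z) = Real.exp (f a - f b) := by
      rw [Real.exp_sub]
      field_simp
    rw [this, Real.log_exp]
  rw [key]
  have hab : f a - f b = ∑ i, θ i * (g i a - g i b) := by
    rw [hf]
    rw [← Finset.sum_sub_distrib]
    congr 1; ext i; ring
  rw [hab]
  apply Finset.sum_le_sum
  intro i _
  have h1 : θ i * (g i a - g i b) ≤ |θ i| * |g i a - g i b| := by
    calc θ i * (g i a - g i b) ≤ |θ i * (g i a - g i b)| := le_abs_self _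
    _ = |θ i| * |g i a - g i b| := abs_mul _ _
  refine h1.trans (mul_le_mul_of_nonneg_left ?_ (abs_nonneg _))
  rw [abs_sub_le_iff]
  constructor <;>
  · apply sub_le_sub
    · exact Finset.le_sup' _ (Finset.mem_univ _)
    · exact Finset.inf'_le _ (Finset.mem_univ _)
end

section
/- In the RBM setting with N >= 1 visible variables and N_H >= 0 hidden variables, the marginal (visible) RBM model P satisfies | LREP(P) - A | <= N_H * log 2, where A = max_{x in {-1,1}^N} max_{h in {-1,1}^{N_H}} f(x,h) - min_{x in {-1,1}^N} max_{h in {-1,1}^{N_H}} f(x,h). (Proposition 2(i)) -/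
/-- ±1 encoding of a Boolean spin. -/
noncomputable def sgn (b : Bool) : ℝ := if b then 1 else -1

/-- The RBM linear function `f(x,h)` of visible outcomes `x` and hidden outcomes `h`. -/
noncomputable def rbmF {N NH : ℕ} (θV : Fin N → ℝ) (θH : Fin NH → ℝ)
    (θVH : Fin N → Fin NH → ℝ) (x : Fin N → Bool) (h : Fin NH → Bool) : ℝ :=
  (∑ i, sgn (x i) * θV i) + (∑ j, sgn (h j) * θH j) +
    ∑ i, ∑ j, sgn (x i) * sgn (h j) * θVH i j

/-- The joint RBM model on pairs `(x,h)`. -/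
noncomputable def rbmJoint {N NH : ℕ} (θV : Fin N → ℝ) (θH : Fin NH → ℝ)
    (θVH : Fin N → Fin NH → ℝ) (p : (Fin N → Bool) × (Fin NH → Bool)) : ℝ :=
  Real.exp (rbmF θV θH θVH p.1 p.2) /
    ∑ q : (Fin N → Bool) × (Fin NH → Bool), Real.exp (rbmF θV θH θVH q.1 q.2)

/-- The marginal (visible) RBM model. -/
noncomputable def rbmMarginal {N NH : ℕ} (θV : Fin N → ℝ) (θH : Fin NH → ℝ)
    (θVH : Fin N → Fin NH → ℝ) (x : Fin N → Bool) : ℝ :=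
  ∑ h : Fin NH → Bool, rbmJoint θV θH θVH (x, h)

/-- `A = max_x max_h f(x,h) - min_x max_h f(x,h)`. -/
noncomputable def rbmA {N NH : ℕ} (θV : Fin N → ℝ) (θH : Fin NH → ℝ)
    (θVH : Fin N → Fin NH → ℝ) : ℝ :=
  (Finset.univ.sup' Finset.univ_nonempty fun x : Fin N → Bool =>
      Finset.univ.sup' Finset.univ_nonempty fun h : Fin NH → Bool => rbmF θV θH θVH x h) -
    (Finset.univ.inf' Finset.univ_nonempty fun x : Fin N → Bool =>
      Finset.univ.sup' Finset.univ_nonempty fun h : Fin NH → Bool => rbmF θV θH θVH x h)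

/-- `k(h) = ∑_i |θV_i + ∑_j h_j θVH_{ij}|`. -/
noncomputable def rbmk {N NH : ℕ} (θV : Fin N → ℝ) (θVH : Fin N → Fin NH → ℝ)
    (h : Fin NH → Bool) : ℝ :=
  ∑ i, |θV i + ∑ j, sgn (h j) * θVH i j|

/-- `B = max_h k(h)`. -/
noncomputable def rbmB {N NH : ℕ} (θV : Fin N → ℝ) (θVH : Fin N → Fin NH → ℝ) : ℝ :=
  Finset.univ.sup' Finset.univ_nonempty (rbmk θV θVH)

/-!
Write `M x = max_h f(x,h)`. Up to the common factor `1/Z`, `P(x)` is `∑_h exp f(x,h)`, which is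
squeezed between `exp (M x)` and `2^{N_H} exp (M x)` (log-sum-exp is within `log (#terms)` of
the max). So `log P = M - log Z + e` with `0 ≤ e ≤ N_H log 2`, and the spread `max - min` of
`log P`, which is `LREP(P)`, differs from that of `M`, which is `A`, by at most `N_H log 2`.
-/

open Finset Real

section Spread

variable {S : Type*} [Fintype S] [Nonempty S]

noncomputable def spread (u : S → ℝ) : ℝ :=
  univ.sup' univ_nonempty u - univ.inf' univ_nonempty u

theorem LREP_exp (u : S → ℝ) : LREP (fun x => exp (u x)) = spread u := by
  have hsup := apply_sup'_eq_sup'_comp univ_nonempty (f := u) exp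
    fun _ _ => exp_monotone.map_max
  have hinf := apply_inf'_eq_inf'_comp univ_nonempty (f := u) exp
    fun _ _ => exp_monotone.map_min
  rw [LREP, ← Function.comp_def, ← hsup, ← hinf, ← exp_sub, log_exp, spread]

theorem LREP_eq_spread_log {P : S → ℝ} (hP : ∀ x, 0 < P x) :
    LREP P = spread fun x => log (P x) := by
  conv_lhs => rw [show P = fun x => exp (log (P x)) from funext fun x => (exp_log (hP x)).symm]
  exact LREP_exp _

theorem abs_spread_sub_spread_le {u v : S → ℝ} {a c : ℝ}
    (hlow : ∀ x, v x + a ≤ u x) (hup : ∀ x, u x ≤ v x + a + c) :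
    |spread u - spread v| ≤ c := by
  have hsup_u : univ.sup' univ_nonempty u ≤ univ.sup' univ_nonempty v + a + c :=
    sup'_le _ _ fun x _ => by linarith [hup x, le_sup' v (mem_univ x)]
  have hsup_v : univ.sup' univ_nonempty v ≤ univ.sup' univ_nonempty u - a :=
    sup'_le _ _ fun x _ => by linarith [hlow x, le_sup' u (mem_univ x)]
  have hinf_u : univ.inf' univ_nonempty v + a ≤ univ.inf' univ_nonempty u :=
    le_inf' _ _ fun x _ => by linarith [hlow x, inf'_le v (mem_univ x)]
  have hinf_v : univ.inf' univ_nonempty u - a - c ≤ univ.inf' univ_nonempty v :=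
    le_inf' _ _ fun x _ => by linarith [hup x, inf'_le u (mem_univ x)]
  rw [spread, spread, abs_sub_le_iff]
  constructor <;> linarith

end Spread

namespace Real

variable {ι : Type*} [Fintype ι] [Nonempty ι]

theorem sup'_le_log_sum_exp (f : ι → ℝ) :
    univ.sup' univ_nonempty f ≤ log (∑ i, exp (f i)) := by
  obtain ⟨i, -, hi⟩ := exists_mem_eq_sup' univ_nonempty f
  rw [hi, le_log_iff_exp_le (sum_pos (fun _ _ => exp_pos _) univ_nonempty)]
  exact single_le_sum (fun j _ => (exp_pos (f j)).le) (mem_univ i)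

theorem log_sum_exp_le_sup'_add_log_card (f : ι → ℝ) :
    log (∑ i, exp (f i)) ≤ univ.sup' univ_nonempty f + log (Fintype.card ι) := by
  have hcard : (0 : ℝ) < Fintype.card ι := by exact_mod_cast Fintype.card_pos
  calc log (∑ i, exp (f i))
      ≤ log (∑ _i : ι, exp (univ.sup' univ_nonempty f)) :=
        log_le_log (sum_pos (fun _ _ => exp_pos _) univ_nonempty)
          (sum_le_sum fun i _ => exp_le_exp.2 (le_sup' f (mem_univ i)))
    _ = univ.sup' univ_nonempty f + log (Fintype.card ι) := by
        rw [sum_const, card_univ, nsmul_eq_mul, log_mul hcard.ne' (exp_pos _).ne', log_exp,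
          add_comm]

end Real

theorem rbmMarginal_eq_div {N NH : ℕ} (θV : Fin N → ℝ) (θH : Fin NH → ℝ)
    (θVH : Fin N → Fin NH → ℝ) (x : Fin N → Bool) :
    rbmMarginal θV θH θVH x = (∑ h, exp (rbmF θV θH θVH x h)) /
      ∑ q : (Fin N → Bool) × (Fin NH → Bool), exp (rbmF θV θH θVH q.1 q.2) := by
  simp only [rbmMarginal, rbmJoint, sum_div]

theorem prop2_i_general {N NH : ℕ} (θV : Fin N → ℝ) (θH : Fin NH → ℝ)
    (θVH : Fin N → Fin NH → ℝ) :
    |LREP (rbmMarginal θV θH θVH) - rbmA θV θH θVH| ≤ (NH : ℝ) * Real.log 2 := by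
  set Z := ∑ q : (Fin N → Bool) × (Fin NH → Bool), exp (rbmF θV θH θVH q.1 q.2)
  have hZ : 0 < Z := sum_pos (fun _ _ => exp_pos _) univ_nonempty
  have hsum (x) : 0 < ∑ h, exp (rbmF θV θH θVH x h) :=
    sum_pos (fun _ _ => exp_pos _) univ_nonempty
  have hlog (x) :
      log (rbmMarginal θV θH θVH x) = log (∑ h, exp (rbmF θV θH θVH x h)) - log Z := by
    rw [rbmMarginal_eq_div, log_div (hsum x).ne' hZ.ne']
  rw [LREP_eq_spread_log fun x => by rw [rbmMarginal_eq_div]; exact div_pos (hsum x) hZ]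
  -- `rbmA` unfolds to the spread of `x ↦ max_h f(x,h)`
  refine abs_spread_sub_spread_le (a := -log Z) (fun x => ?_) (fun x => ?_)
  · linarith [hlog x, sup'_le_log_sum_exp (rbmF θV θH θVH x)]
  · have hcard : log (Fintype.card (Fin NH → Bool)) = NH * log 2 := by
      simp [Real.log_pow]
    linarith [hlog x, log_sum_exp_le_sup'_add_log_card (rbmF θV θH θVH x)]

/-- Proposition 2(i): the marginal RBM model satisfies `|LREP(P) - A| ≤ N_H * log 2`. -/
theorem prop2_i {N NH : ℕ} (hN : 1 ≤ N) (θV : Fin N → ℝ) (θH : Fin NH → ℝ)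
    (θVH : Fin N → Fin NH → ℝ) :
    |LREP (rbmMarginal θV θH θVH) - rbmA θV θH θVH| ≤ (NH : ℝ) * Real.log 2 :=
  prop2_i_general θV θH θVH
end

section
/- In the RBM setting, the joint instability measure LREP(Ptilde) = max_{x,h} f(x,h) - min_{x,h} f(x,h) satisfies 2*B + 2*||theta^H||_1 >= LREP(Ptilde) >= 2 * max{ B, ||theta^H||_1 }, where B = max_{h in {-1,1}^{N_H}} sum_{i=1}^N | theta^V_i + sum_{j=1}^{N_H} h_j * theta^{VH}_{ij} | and ||theta^H||_1 = sum_{j=1}^{N_H} |theta^H_j|. (Proposition 2(ii), joint-model bounds) -/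
section Aux

lemma abs_sgn' (b : Bool) : |sgn b| = 1 := by cases b <;> simp [sgn]

lemma sgn_not' (b : Bool) : sgn (!b) = - sgn b := by cases b <;> simp [sgn]

lemma sgn_decide_mul (t : ℝ) : sgn (decide (0 ≤ t)) * t = |t| := by
  by_cases h : 0 ≤ t
  · simp [sgn, h, abs_of_nonneg h]
  · simp [sgn, h, abs_of_neg (lt_of_not_ge h)]

lemma abs_sgn_sum {n : ℕ} (b : Fin n → Bool) (t : Fin n → ℝ) :
    |∑ i, sgn (b i) * t i| ≤ ∑ i, |t i| :=
  (Finset.abs_sum_le_sum_abs _ _).trans (le_of_eq (by simp [abs_mul, abs_sgn']))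

lemma rbmF_eq1 {N NH : ℕ} (θV : Fin N → ℝ) (θH : Fin NH → ℝ)
    (θVH : Fin N → Fin NH → ℝ) (x : Fin N → Bool) (h : Fin NH → Bool) :
    rbmF θV θH θVH x h = (∑ j, sgn (h j) * θH j) +
      ∑ i, sgn (x i) * (θV i + ∑ j, sgn (h j) * θVH i j) := by
  unfold rbmF
  simp only [mul_add, Finset.mul_sum, Finset.sum_add_distrib, mul_assoc]
  ring_nf

lemma rbmF_eq2 {N NH : ℕ} (θV : Fin N → ℝ) (θH : Fin NH → ℝ)
    (θVH : Fin N → Fin NH → ℝ) (x : Fin N → Bool) (h : Fin NH → Bool) :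
    rbmF θV θH θVH x h = (∑ i, sgn (x i) * θV i) +
      ∑ j, sgn (h j) * (θH j + ∑ i, sgn (x i) * θVH i j) := by
  unfold rbmF
  rw [Finset.sum_comm]
  simp only [mul_add, Finset.mul_sum, Finset.sum_add_distrib, mul_assoc, mul_left_comm]
  ring_nf

end Aux

/-- Proposition 2(ii), joint-model bounds: `LREP(P̃) = max f - min f` and
`2B + 2‖θH‖₁ ≥ LREP(P̃) ≥ 2 max{B, ‖θH‖₁}`. -/
theorem prop2_ii_joint {N NH : ℕ} (hN : 1 ≤ N) (θV : Fin N → ℝ) (θH : Fin NH → ℝ)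
    (θVH : Fin N → Fin NH → ℝ) :
    LREP (rbmJoint θV θH θVH) =
        (Finset.univ.sup' Finset.univ_nonempty
            fun p : (Fin N → Bool) × (Fin NH → Bool) => rbmF θV θH θVH p.1 p.2) -
          (Finset.univ.inf' Finset.univ_nonempty
            fun p : (Fin N → Bool) × (Fin NH → Bool) => rbmF θV θH θVH p.1 p.2) ∧
      2 * rbmB θV θVH + 2 * (∑ j, |θH j|) ≥ LREP (rbmJoint θV θH θVH) ∧
        LREP (rbmJoint θV θH θVH) ≥ 2 * max (rbmB θV θVH) (∑ j, |θH j|) := by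
  classical
  set F : (Fin N → Bool) × (Fin NH → Bool) → ℝ :=
    fun p => rbmF θV θH θVH p.1 p.2 with hFdef
  set Z : ℝ := ∑ q : (Fin N → Bool) × (Fin NH → Bool), Real.exp (F q) with hZdef
  have hZ : 0 < Z := Finset.sum_pos (fun q _ => Real.exp_pos _) ⟨default, Finset.mem_univ _⟩
  have hJ : ∀ p, rbmJoint θV θH θVH p = Real.exp (F p) / Z := fun p => rfl
  set M : ℝ := Finset.univ.sup' Finset.univ_nonempty F with hMdef
  set m : ℝ := Finset.univ.inf' Finset.univ_nonempty F with hmdef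
  -- sup and inf of the joint model
  have hsup : Finset.univ.sup' Finset.univ_nonempty (rbmJoint θV θH θVH)
      = Real.exp M / Z := by
    obtain ⟨p, -, hp⟩ := Finset.exists_mem_eq_sup' Finset.univ_nonempty F
    refine le_antisymm (Finset.sup'_le _ _ fun q _ => ?_) ?_
    · rw [hJ q]
      gcongr
      exact Finset.le_sup' F (Finset.mem_univ q)
    · rw [hMdef, hp, ← hJ p]
      exact Finset.le_sup' _ (Finset.mem_univ p)
  have hinf : Finset.univ.inf' Finset.univ_nonempty (rbmJoint θV θH θVH)
      = Real.exp m / Z := by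
    obtain ⟨p, -, hp⟩ := Finset.exists_mem_eq_inf' Finset.univ_nonempty F
    refine le_antisymm ?_ (Finset.le_inf' _ _ fun q _ => ?_)
    · rw [hmdef, hp, ← hJ p]
      exact Finset.inf'_le _ (Finset.mem_univ p)
    · rw [hJ q]
      gcongr
      exact Finset.inf'_le F (Finset.mem_univ q)
  have hLREP : LREP (rbmJoint θV θH θVH) = M - m := by
    have hdiv : Real.exp M / Z / (Real.exp m / Z) = Real.exp (M - m) := by
      rw [Real.exp_sub]
      field_simp
    rw [LREP, hsup, hinf, hdiv, Real.log_exp]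
  refine ⟨hLREP, ?_, ?_⟩
  -- upper bound
  · have key : ∀ p : (Fin N → Bool) × (Fin NH → Bool),
        |F p| ≤ rbmB θV θVH + ∑ j, |θH j| := by
      rintro ⟨x, h⟩
      have h1 : F (x, h) = (∑ j, sgn (h j) * θH j) +
          ∑ i, sgn (x i) * (θV i + ∑ j, sgn (h j) * θVH i j) := rbmF_eq1 θV θH θVH x h
      rw [h1]
      refine (abs_add_le _ _).trans ?_
      have ha : |∑ j, sgn (h j) * θH j| ≤ ∑ j, |θH j| := abs_sgn_sum h θH
      have hb : |∑ i, sgn (x i) * (θV i + ∑ j, sgn (h j) * θVH i j)| ≤ rbmB θV θVH := by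
        refine (abs_sgn_sum x _).trans ?_
        exact Finset.le_sup' (rbmk θV θVH) (Finset.mem_univ h)
      linarith
    have hM : M ≤ rbmB θV θVH + ∑ j, |θH j| :=
      Finset.sup'_le _ _ fun p _ => (le_abs_self _).trans (key p)
    have hm : -(rbmB θV θVH + ∑ j, |θH j|) ≤ m :=
      Finset.le_inf' _ _ fun p _ => by
        have := key p
        linarith [neg_abs_le (F p)]
    rw [hLREP]
    linarith
  -- lower bound
  · have hgapB : 2 * rbmB θV θVH ≤ M - m := by
      obtain ⟨h0, -, hh0⟩ := Finset.exists_mem_eq_sup' Finset.univ_nonempty (rbmk θV θVH)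
      set t : Fin N → ℝ := fun i => θV i + ∑ j, sgn (h0 j) * θVH i j with htdef
      set xp : Fin N → Bool := fun i => decide (0 ≤ t i) with hxpdef
      set c : ℝ := ∑ j, sgn (h0 j) * θH j with hcdef
      have hFp : F (xp, h0) = c + rbmk θV θVH h0 := by
        rw [hFdef]
        simp only
        rw [rbmF_eq1, rbmk]
        congr 1
        exact Finset.sum_congr rfl fun i _ => sgn_decide_mul (t i)
      have hFn : F (fun i => !xp i, h0) = c - rbmk θV θVH h0 := by
        rw [hFdef]
        simp only
        rw [rbmF_eq1, rbmk, sub_eq_add_neg, ← Finset.sum_neg_distrib]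
        congr 1
        refine Finset.sum_congr rfl fun i _ => ?_
        rw [sgn_not', neg_mul, sgn_decide_mul (t i)]
      have h1 : c + rbmk θV θVH h0 ≤ M := by
        rw [← hFp]; exact Finset.le_sup' F (Finset.mem_univ _)
      have h2 : m ≤ c - rbmk θV θVH h0 := by
        rw [← hFn]; exact Finset.inf'_le F (Finset.mem_univ _)
      rw [rbmB, hh0]
      linarith
    have hgapT : 2 * (∑ j, |θH j|) ≤ M - m := by
      have gen : ∀ x : Fin N → Bool,
          2 * (∑ j, |θH j + ∑ i, sgn (x i) * θVH i j|) ≤ M - m := by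
        intro x
        set u : Fin NH → ℝ := fun j => θH j + ∑ i, sgn (x i) * θVH i j with hudef
        set hp : Fin NH → Bool := fun j => decide (0 ≤ u j) with hhpdef
        set c : ℝ := ∑ i, sgn (x i) * θV i with hcdef
        have hFp : F (x, hp) = c + ∑ j, |u j| := by
          rw [hFdef]
          simp only
          rw [rbmF_eq2]
          congr 1
          exact Finset.sum_congr rfl fun j _ => sgn_decide_mul (u j)
        have hFn : F (x, fun j => !hp j) = c - ∑ j, |u j| := by
          rw [hFdef]
          simp only
          rw [rbmF_eq2, sub_eq_add_neg, ← Finset.sum_neg_distrib]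
          congr 1
          refine Finset.sum_congr rfl fun j _ => ?_
          rw [sgn_not', neg_mul, sgn_decide_mul (u j)]
        have h1 : c + ∑ j, |u j| ≤ M := by
          rw [← hFp]; exact Finset.le_sup' F (Finset.mem_univ _)
        have h2 : m ≤ c - ∑ j, |u j| := by
          rw [← hFn]; exact Finset.inf'_le F (Finset.mem_univ _)
        linarith
      have g1 := gen (fun _ => true)
      have g2 := gen (fun _ => false)
      have hneg : ∀ j, (∑ i, sgn ((fun _ : Fin N => false) i) * θVH i j)
          = -(∑ i, sgn ((fun _ : Fin N => true) i) * θVH i j) := by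
        intro j
        rw [← Finset.sum_neg_distrib]
        exact Finset.sum_congr rfl fun i _ => by simp [sgn]
      set a : Fin NH → ℝ := fun j => ∑ i, sgn ((fun _ : Fin N => true) i) * θVH i j
      have hsum : ∑ j, (|θH j + a j| + |θH j + -(a j)|) ≥ ∑ j, 2 * |θH j| := by
        refine Finset.sum_le_sum fun j _ => ?_
        have : 2 * |θH j| = |(θH j + a j) + (θH j + -(a j))| := by
          rw [show (θH j + a j) + (θH j + -(a j)) = 2 * θH j by ring, abs_mul]
          norm_num
        rw [this]
        exact abs_add_le _ _
      simp only [hneg] at g2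
      rw [Finset.sum_add_distrib] at hsum
      rw [Finset.sum_congr rfl fun j _ => (two_mul |θH j|), Finset.sum_add_distrib] at hsum
      linarith
    rw [hLREP, ge_iff_le]
    rcases max_cases (rbmB θV θVH) (∑ j, |θH j|) with ⟨hmx, -⟩ | ⟨hmx, -⟩ <;>
      rw [hmx] <;> linarith
end

section
/- Consider the RBM sequence setting with sup_{N >= 1} N_H(N)/N < infinity. Then the joint RBM model sequence Ptilde_N is S-unstable (i.e. LREP(Ptilde_N)/(N + N_H(N)) tends to infinity) if and only if max{ ||theta^H_N||_1, B_N } / N tends to infinity, where B_N = max_{h in {-1,1}^{N_H(N)}} sum_{i=1}^N | (theta^V_N)_i + sum_j h_j * (theta^{VH}_N)_{ij} | and ||theta^H_N||_1 = sum_j |(theta^H_N)_j|; moreover, if the sequence ( ||theta^H_N||_1 + B_N )/N is bounded then sup_{N >= 1} LREP(Ptilde_N)/(N + N_H(N)) < infinity. (Proposition 2(iii.2)) -/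
lemma rbmF_eq {N M : ℕ} (θV : Fin N → ℝ) (θH : Fin M → ℝ)
    (θVH : Fin N → Fin M → ℝ) (x : Fin N → Bool) (h : Fin M → Bool) :
    rbmF θV θH θVH x h =
      (∑ i, sgn (x i) * (θV i + ∑ j, sgn (h j) * θVH i j)) + ∑ j, sgn (h j) * θH j := by
  simp only [rbmF, mul_add, Finset.mul_sum, Finset.sum_add_distrib, mul_assoc]
  ring

lemma LREP_joint_eq {N M : ℕ} (θV : Fin N → ℝ) (θH : Fin M → ℝ)
    (θVH : Fin N → Fin M → ℝ) :
    LREP (rbmJoint θV θH θVH) =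
      (Finset.univ.sup' Finset.univ_nonempty
        fun p : (Fin N → Bool) × (Fin M → Bool) => rbmF θV θH θVH p.1 p.2) -
      (Finset.univ.inf' Finset.univ_nonempty
        fun p : (Fin N → Bool) × (Fin M → Bool) => rbmF θV θH θVH p.1 p.2) := by
  set F := fun p : (Fin N → Bool) × (Fin M → Bool) => rbmF θV θH θVH p.1 p.2 with hF
  set Z := ∑ q : (Fin N → Bool) × (Fin M → Bool), Real.exp (rbmF θV θH θVH q.1 q.2) with hZdef
  have hZ : 0 < Z := Finset.sum_pos (fun q _ => Real.exp_pos _) Finset.univ_nonempty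
  have hsup : Finset.univ.sup' Finset.univ_nonempty (rbmJoint θV θH θVH)
      = Real.exp (Finset.univ.sup' Finset.univ_nonempty F) / Z := by
    obtain ⟨p, -, hp⟩ := Finset.exists_mem_eq_sup' Finset.univ_nonempty F
    rw [hp]
    apply le_antisymm
    · apply Finset.sup'_le
      intro q _
      have hq : F q ≤ F p := hp ▸ Finset.le_sup' F (Finset.mem_univ q)
      show Real.exp (F q) / Z ≤ Real.exp (F p) / Z
      exact div_le_div_of_nonneg_right (Real.exp_le_exp.mpr hq) hZ.le
    · exact Finset.le_sup' (rbmJoint θV θH θVH) (Finset.mem_univ p)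
  have hinf : Finset.univ.inf' Finset.univ_nonempty (rbmJoint θV θH θVH)
      = Real.exp (Finset.univ.inf' Finset.univ_nonempty F) / Z := by
    obtain ⟨p, -, hp⟩ := Finset.exists_mem_eq_inf' Finset.univ_nonempty F
    rw [hp]
    apply le_antisymm
    · exact Finset.inf'_le (rbmJoint θV θH θVH) (Finset.mem_univ p)
    · apply Finset.le_inf'
      intro q _
      have hq : F p ≤ F q := hp ▸ Finset.inf'_le F (Finset.mem_univ q)
      show Real.exp (F p) / Z ≤ Real.exp (F q) / Z
      exact div_le_div_of_nonneg_right (Real.exp_le_exp.mpr hq) hZ.le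
  rw [LREP, hsup, hinf]
  have : Real.exp (Finset.univ.sup' Finset.univ_nonempty F) / Z /
      (Real.exp (Finset.univ.inf' Finset.univ_nonempty F) / Z)
      = Real.exp (Finset.univ.sup' Finset.univ_nonempty F) /
        Real.exp (Finset.univ.inf' Finset.univ_nonempty F) := by
    field_simp
  rw [this, ← Real.exp_sub, Real.log_exp]

lemma sgn_mul_le (b : Bool) (c : ℝ) : sgn b * c ≤ |c| := by
  cases b
  · simpa [sgn] using neg_le_abs c
  · simpa [sgn] using le_abs_self c

lemma neg_abs_le_sgn_mul (b : Bool) (c : ℝ) : -|c| ≤ sgn b * c := by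
  cases b
  · simpa [sgn] using neg_le_neg (le_abs_self c)
  · simpa [sgn] using neg_abs_le c

lemma sgn_opt (c : ℝ) : sgn (decide (0 ≤ c)) * c = |c| := by
  rcases le_or_gt 0 c with h | h
  · simp [sgn, h, abs_of_nonneg h]
  · simp [sgn, not_le.mpr h, abs_of_neg h]

lemma sgn_pes (c : ℝ) : sgn (decide (c < 0)) * c = -|c| := by
  rcases lt_or_ge c 0 with h | h
  · simp [sgn, h, abs_of_neg h]
  · simp [sgn, not_lt.mpr h, abs_of_nonneg h]

section Bounds

variable {N M : ℕ} (θV : Fin N → ℝ) (θH : Fin M → ℝ) (θVH : Fin N → Fin M → ℝ)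

lemma rbmk_nonneg (h : Fin M → Bool) : 0 ≤ rbmk θV θVH h :=
  Finset.sum_nonneg fun i _ => abs_nonneg _

lemma rbmk_le_rbmB (h : Fin M → Bool) : rbmk θV θVH h ≤ rbmB θV θVH :=
  Finset.le_sup' (rbmk θV θVH) (Finset.mem_univ h)

lemma rbmB_nonneg : 0 ≤ rbmB θV θVH :=
  le_trans (rbmk_nonneg θV θVH fun _ => true) (rbmk_le_rbmB θV θVH _)

lemma sumH_le (h : Fin M → Bool) : ∑ j, sgn (h j) * θH j ≤ ∑ j, |θH j| :=
  Finset.sum_le_sum fun j _ => sgn_mul_le _ _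

lemma neg_le_sumH (h : Fin M → Bool) : -∑ j, |θH j| ≤ ∑ j, sgn (h j) * θH j := by
  rw [← Finset.sum_neg_distrib]
  exact Finset.sum_le_sum fun j _ => neg_abs_le_sgn_mul _ _

lemma rbmF_le (x : Fin N → Bool) (h : Fin M → Bool) :
    rbmF θV θH θVH x h ≤ (∑ j, |θH j|) + rbmB θV θVH := by
  rw [rbmF_eq]
  have h1 : (∑ i, sgn (x i) * (θV i + ∑ j, sgn (h j) * θVH i j)) ≤ rbmk θV θVH h :=
    Finset.sum_le_sum fun i _ => sgn_mul_le _ _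
  have h2 := rbmk_le_rbmB θV θVH h
  have h3 := sumH_le θH h
  linarith

lemma neg_le_rbmF (x : Fin N → Bool) (h : Fin M → Bool) :
    -((∑ j, |θH j|) + rbmB θV θVH) ≤ rbmF θV θH θVH x h := by
  rw [rbmF_eq]
  have h1 : -rbmk θV θVH h ≤ ∑ i, sgn (x i) * (θV i + ∑ j, sgn (h j) * θVH i j) := by
    rw [rbmk, ← Finset.sum_neg_distrib]
    exact Finset.sum_le_sum fun i _ => neg_abs_le_sgn_mul _ _
  have h2 := rbmk_le_rbmB θV θVH h
  have h3 := neg_le_sumH θH h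
  linarith

lemma rbmF_opt (h : Fin M → Bool) :
    rbmF θV θH θVH (fun i => decide (0 ≤ θV i + ∑ j, sgn (h j) * θVH i j)) h =
      rbmk θV θVH h + ∑ j, sgn (h j) * θH j := by
  rw [rbmF_eq, rbmk]
  congr 1
  exact Finset.sum_congr rfl fun i _ => sgn_opt _

lemma rbmF_pes (h : Fin M → Bool) :
    rbmF θV θH θVH (fun i => decide (θV i + ∑ j, sgn (h j) * θVH i j < 0)) h =
      -rbmk θV θVH h + ∑ j, sgn (h j) * θH j := by
  rw [rbmF_eq, rbmk]
  congr 1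
  rw [← Finset.sum_neg_distrib]
  exact Finset.sum_congr rfl fun i _ => sgn_pes _

lemma LREP_joint_le :
    LREP (rbmJoint θV θH θVH) ≤ 2 * ((∑ j, |θH j|) + rbmB θV θVH) := by
  rw [LREP_joint_eq]
  have h1 : Finset.univ.sup' Finset.univ_nonempty
      (fun p : (Fin N → Bool) × (Fin M → Bool) => rbmF θV θH θVH p.1 p.2)
      ≤ (∑ j, |θH j|) + rbmB θV θVH :=
    Finset.sup'_le _ _ fun p _ => rbmF_le θV θH θVH p.1 p.2
  have h2 : -((∑ j, |θH j|) + rbmB θV θVH) ≤ Finset.univ.inf' Finset.univ_nonempty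
      (fun p : (Fin N → Bool) × (Fin M → Bool) => rbmF θV θH θVH p.1 p.2) :=
    Finset.le_inf' _ _ fun p _ => neg_le_rbmF θV θH θVH p.1 p.2
  linarith

lemma le_LREP_joint :
    2 * max (∑ j, |θH j|) (rbmB θV θVH) ≤ LREP (rbmJoint θV θH θVH) := by
  rw [LREP_joint_eq]
  set F := fun p : (Fin N → Bool) × (Fin M → Bool) => rbmF θV θH θVH p.1 p.2 with hF
  have hsup : ∀ p : (Fin N → Bool) × (Fin M → Bool),
      F p ≤ Finset.univ.sup' Finset.univ_nonempty F :=
    fun p => Finset.le_sup' F (Finset.mem_univ p)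
  have hinf : ∀ p : (Fin N → Bool) × (Fin M → Bool),
      Finset.univ.inf' Finset.univ_nonempty F ≤ F p :=
    fun p => Finset.inf'_le F (Finset.mem_univ p)
  rcases le_total (∑ j, |θH j|) (rbmB θV θVH) with hc | hc
  · rw [max_eq_right hc]
    obtain ⟨h, -, hh⟩ := Finset.exists_mem_eq_sup' (Finset.univ_nonempty
      (α := Fin M → Bool)) (rbmk θV θVH)
    have e1 := hsup ((fun i => decide (0 ≤ θV i + ∑ j, sgn (h j) * θVH i j)), h)
    have e2 := hinf ((fun i => decide (θV i + ∑ j, sgn (h j) * θVH i j < 0)), h)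
    rw [show F ((fun i => decide (0 ≤ θV i + ∑ j, sgn (h j) * θVH i j)), h)
        = rbmF θV θH θVH (fun i => decide (0 ≤ θV i + ∑ j, sgn (h j) * θVH i j)) h from rfl,
      rbmF_opt] at e1
    rw [show F ((fun i => decide (θV i + ∑ j, sgn (h j) * θVH i j < 0)), h)
        = rbmF θV θH θVH (fun i => decide (θV i + ∑ j, sgn (h j) * θVH i j < 0)) h from rfl,
      rbmF_pes] at e2
    have hB : rbmB θV θVH = rbmk θV θVH h := hh
    linarith
  · rw [max_eq_left hc]
    set h0 : Fin M → Bool := fun j => decide (0 ≤ θH j) with hh0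
    set h1 : Fin M → Bool := fun j => decide (θH j < 0) with hh1
    have e1 := hsup ((fun i => decide (0 ≤ θV i + ∑ j, sgn (h0 j) * θVH i j)), h0)
    have e2 := hinf ((fun i => decide (θV i + ∑ j, sgn (h1 j) * θVH i j < 0)), h1)
    rw [show F ((fun i => decide (0 ≤ θV i + ∑ j, sgn (h0 j) * θVH i j)), h0)
        = rbmF θV θH θVH (fun i => decide (0 ≤ θV i + ∑ j, sgn (h0 j) * θVH i j)) h0 from rfl,
      rbmF_opt] at e1
    rw [show F ((fun i => decide (θV i + ∑ j, sgn (h1 j) * θVH i j < 0)), h1)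
        = rbmF θV θH θVH (fun i => decide (θV i + ∑ j, sgn (h1 j) * θVH i j < 0)) h1 from rfl,
      rbmF_pes] at e2
    have g1 : ∑ j, sgn (h0 j) * θH j = ∑ j, |θH j| :=
      Finset.sum_congr rfl fun j _ => sgn_opt _
    have g2 : ∑ j, sgn (h1 j) * θH j = -∑ j, |θH j| := by
      rw [← Finset.sum_neg_distrib]
      exact Finset.sum_congr rfl fun j _ => sgn_pes _
    have k1 := rbmk_nonneg θV θVH h0
    have k2 := rbmk_nonneg θV θVH h1
    rw [g1] at e1
    rw [g2] at e2
    linarith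

end Bounds

/-- Proposition 2(iii.2): with `N_H(N)/N` bounded, the joint RBM model sequence is
S-unstable iff `max{‖θH_N‖₁, B_N}/N → ∞`; moreover if `(‖θH_N‖₁ + B_N)/N` is bounded
then the joint model sequence is S-stable. -/
theorem prop2_iii_2 (NH : ℕ → ℕ)
    (θV : ∀ N : ℕ, Fin N → ℝ) (θH : ∀ N : ℕ, Fin (NH N) → ℝ)
    (θVH : ∀ N : ℕ, Fin N → Fin (NH N) → ℝ)
    (hNH : ∃ C : ℝ, ∀ N : ℕ, 1 ≤ N → (NH N : ℝ) / N ≤ C) :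
    (Filter.Tendsto
        (fun N : ℕ => LREP (rbmJoint (θV N) (θH N) (θVH N)) / ((N : ℝ) + NH N))
        Filter.atTop Filter.atTop ↔
      Filter.Tendsto
        (fun N : ℕ => max (∑ j, |θH N j|) (rbmB (θV N) (θVH N)) / (N : ℝ))
        Filter.atTop Filter.atTop) ∧
    ((∃ C : ℝ, ∀ N : ℕ, 1 ≤ N →
        ((∑ j, |θH N j|) + rbmB (θV N) (θVH N)) / (N : ℝ) ≤ C) →
      ∃ C : ℝ, ∀ N : ℕ, 1 ≤ N →
        LREP (rbmJoint (θV N) (θH N) (θVH N)) / ((N : ℝ) + NH N) ≤ C) := by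
  obtain ⟨C, hC⟩ := hNH
  have hC1 : (NH 1 : ℝ) ≤ C := by simpa using hC 1 le_rfl
  have hC0 : 0 ≤ C := le_trans (Nat.cast_nonneg _) hC1
  set L := fun n : ℕ => LREP (rbmJoint (θV n) (θH n) (θVH n)) / ((n : ℝ) + NH n) with hL
  set Mx := fun n : ℕ => max (∑ j, |θH n j|) (rbmB (θV n) (θVH n)) / (n : ℝ) with hMx
  have hTnn : ∀ n, 0 ≤ ∑ j, |θH n j| := fun n => Finset.sum_nonneg fun j _ => abs_nonneg _
  have hmaxnn : ∀ n, (0:ℝ) ≤ max (∑ j, |θH n j|) (rbmB (θV n) (θVH n)) :=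
    fun n => le_trans (hTnn n) (le_max_left _ _)
  have hLnn : ∀ n, 0 ≤ LREP (rbmJoint (θV n) (θH n) (θVH n)) :=
    fun n => le_trans (mul_nonneg (by norm_num) (hmaxnn n)) (le_LREP_joint (θV n) (θH n) (θVH n))
  have key1 : ∀ n : ℕ, 1 ≤ n → L n ≤ 4 * Mx n := by
    intro n hn
    have hNpos : (0:ℝ) < n := by exact_mod_cast hn
    have h1 : LREP (rbmJoint (θV n) (θH n) (θVH n))
        ≤ 4 * max (∑ j, |θH n j|) (rbmB (θV n) (θVH n)) := by
      have := LREP_joint_le (θV n) (θH n) (θVH n)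
      have hT := le_max_left (∑ j, |θH n j|) (rbmB (θV n) (θVH n))
      have hB := le_max_right (∑ j, |θH n j|) (rbmB (θV n) (θVH n))
      linarith
    calc L n ≤ (4 * max (∑ j, |θH n j|) (rbmB (θV n) (θVH n))) / (n : ℝ) := by
          apply div_le_div₀ (by positivity) h1 hNpos
          exact le_add_of_nonneg_right (by positivity)
      _ = 4 * Mx n := by rw [hMx, mul_div_assoc]
  have key2 : ∀ n : ℕ, 1 ≤ n → (2 / (1 + C)) * Mx n ≤ L n := by
    intro n hn
    have hNpos : (0:ℝ) < n := by exact_mod_cast hn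
    have hden : (n : ℝ) + NH n ≤ (1 + C) * n := by
      have := hC n hn
      have : (NH n : ℝ) ≤ C * n := by
        rw [div_le_iff₀ hNpos] at this; exact this
      nlinarith
    have hdpos : (0:ℝ) < (n : ℝ) + NH n := by positivity
    have h2 : 2 * max (∑ j, |θH n j|) (rbmB (θV n) (θVH n))
        ≤ LREP (rbmJoint (θV n) (θH n) (θVH n)) := le_LREP_joint _ _ _
    calc (2 / (1 + C)) * Mx n
        = (2 * max (∑ j, |θH n j|) (rbmB (θV n) (θVH n))) / ((1 + C) * n) := by
          rw [hMx, div_mul_div_comm]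
      _ ≤ L n := div_le_div₀ (hLnn n) h2 hdpos hden
  constructor
  · constructor
    · intro hLt
      have h4 : Filter.Tendsto (fun n => L n / 4) Filter.atTop Filter.atTop :=
        hLt.atTop_div_const (by norm_num)
      refine Filter.tendsto_atTop_mono' _ ?_ h4
      filter_upwards [Filter.eventually_ge_atTop 1] with n hn
      have := key1 n hn
      linarith
    · intro hMt
      have hcpos : (0:ℝ) < 2 / (1 + C) := by positivity
      have h2 : Filter.Tendsto (fun n => (2 / (1 + C)) * Mx n) Filter.atTop Filter.atTop :=
        hMt.const_mul_atTop hcpos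
      refine Filter.tendsto_atTop_mono' _ ?_ h2
      filter_upwards [Filter.eventually_ge_atTop 1] with n hn
      exact key2 n hn
  · rintro ⟨C', hC'⟩
    refine ⟨2 * C', fun n hn => ?_⟩
    have hNpos : (0:ℝ) < n := by exact_mod_cast hn
    calc L n ≤ (2 * ((∑ j, |θH n j|) + rbmB (θV n) (θVH n))) / (n : ℝ) := by
          apply div_le_div₀ ?_ (LREP_joint_le _ _ _) hNpos
            (le_add_of_nonneg_right (by positivity))
          have := hTnn n; have := rbmB_nonneg (θV n) (θVH n); linarith
      _ = 2 * (((∑ j, |θH n j|) + rbmB (θV n) (θVH n)) / (n : ℝ)) := by rw [mul_div_assoc]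
      _ ≤ 2 * C' := by have := hC' n hn; linarith
end

section
/- Consider the RBM sequence setting with sup_{N >= 1} N_H(N)/N < infinity. If the marginal (visible) RBM model sequence P_N is S-unstable (i.e. LREP(P_N)/N tends to infinity), then the joint RBM model sequence Ptilde_N is also S-unstable (i.e. LREP(Ptilde_N)/(N + N_H(N)) tends to infinity). (Proposition 2(iii.3)) -/
open Finset Real


lemma inf'_le_sup'_univ {S : Type*} [Fintype S] [Nonempty S] (P : S → ℝ) :
    Finset.univ.inf' Finset.univ_nonempty P ≤ Finset.univ.sup' Finset.univ_nonempty P :=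
  (Finset.inf'_le P (Finset.mem_univ (Classical.arbitrary S))).trans
    (Finset.le_sup' P (Finset.mem_univ _))

section key
variable {N M : ℕ} (θV : Fin N → ℝ) (θH : Fin M → ℝ) (θVH : Fin N → Fin M → ℝ)

lemma joint_pos (p : (Fin N → Bool) × (Fin M → Bool)) : 0 < rbmJoint θV θH θVH p := by
  apply div_pos (Real.exp_pos _)
  exact Finset.sum_pos (fun q _ => Real.exp_pos _) Finset.univ_nonempty

lemma key : LREP (rbmMarginal θV θH θVH) ≤ LREP (rbmJoint θV θH θVH) + M * Real.log 2 := by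
  set J := rbmJoint θV θH θVH with hJ
  set Mg := rbmMarginal θV θH θVH with hMg
  have hJpos := joint_pos θV θH θVH
  have hMpos : ∀ x, 0 < Mg x := fun x =>
    Finset.sum_pos (fun h _ => hJpos _) Finset.univ_nonempty
  set sJ := Finset.univ.sup' Finset.univ_nonempty J
  set iJ := Finset.univ.inf' Finset.univ_nonempty J
  set sM := Finset.univ.sup' Finset.univ_nonempty Mg
  set iM := Finset.univ.inf' Finset.univ_nonempty Mg
  have hiJ : 0 < iJ := by
    rw [Finset.lt_inf'_iff]; exact fun b _ => hJpos b
  have hiM : 0 < iM := by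
    rw [Finset.lt_inf'_iff]; exact fun b _ => hMpos b
  have hsJ : 0 < sJ := lt_of_lt_of_le hiJ (inf'_le_sup'_univ _)
  have hsM : 0 < sM := lt_of_lt_of_le hiM (inf'_le_sup'_univ _)
  have hcard : (Fintype.card (Fin M → Bool) : ℝ) = 2 ^ M := by simp
  have h1 : sM ≤ 2 ^ M * sJ := by
    apply Finset.sup'_le
    intro x _
    calc Mg x = ∑ h : Fin M → Bool, J (x, h) := rfl
      _ ≤ ∑ _h : Fin M → Bool, sJ :=
        Finset.sum_le_sum fun h _ => Finset.le_sup' J (Finset.mem_univ (x, h))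
      _ = 2 ^ M * sJ := by
        rw [Finset.sum_const, Finset.card_univ, nsmul_eq_mul, hcard]
  have h2 : iJ ≤ iM := by
    apply Finset.le_inf'
    intro x _
    have h0 : (Fin M → Bool) := Classical.arbitrary _
    calc iJ ≤ J (x, h0) := Finset.inf'_le J (Finset.mem_univ (x, h0))
      _ ≤ ∑ h : Fin M → Bool, J (x, h) :=
        Finset.single_le_sum (fun h _ => (hJpos _).le) (Finset.mem_univ h0)
      _ = Mg x := rfl
  have hdiv : sM / iM ≤ 2 ^ M * (sJ / iJ) := by
    rw [mul_div_assoc'] at *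
    exact div_le_div₀ (by positivity) h1 hiJ h2
  calc LREP Mg = Real.log (sM / iM) := rfl
    _ ≤ Real.log (2 ^ M * (sJ / iJ)) :=
        Real.log_le_log (div_pos hsM hiM) hdiv
    _ = M * Real.log 2 + Real.log (sJ / iJ) := by
        rw [Real.log_mul (by positivity) (by positivity), Real.log_pow]
    _ = LREP J + M * Real.log 2 := by rw [add_comm]; rfl

lemma LREP_nonneg {S : Type*} [Fintype S] [Nonempty S] (P : S → ℝ)
    (hP : ∀ s, 0 < P s) : 0 ≤ LREP P := by
  have hi : 0 < Finset.univ.inf' Finset.univ_nonempty P := by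
    rw [Finset.lt_inf'_iff]; exact fun b _ => hP b
  apply Real.log_nonneg
  rw [le_div_iff₀ hi, one_mul]
  exact inf'_le_sup'_univ _

end key

/-- Proposition 2(iii.3): with `N_H(N)/N` bounded, if the visible RBM model sequence is
S-unstable then so is the joint RBM model sequence. -/
theorem prop2_iii_3 (NH : ℕ → ℕ)
    (θV : ∀ N : ℕ, Fin N → ℝ) (θH : ∀ N : ℕ, Fin (NH N) → ℝ)
    (θVH : ∀ N : ℕ, Fin N → Fin (NH N) → ℝ)
    (hNH : ∃ C : ℝ, ∀ N : ℕ, 1 ≤ N → (NH N : ℝ) / N ≤ C)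
    (hunstable : Filter.Tendsto
      (fun N : ℕ => LREP (rbmMarginal (θV N) (θH N) (θVH N)) / (N : ℝ))
      Filter.atTop Filter.atTop) :
    Filter.Tendsto
      (fun N : ℕ => LREP (rbmJoint (θV N) (θH N) (θVH N)) / ((N : ℝ) + NH N))
      Filter.atTop Filter.atTop := by
  obtain ⟨C, hC⟩ := hNH
  have hC0 : 0 ≤ C := le_trans (by positivity : (0:ℝ) ≤ (NH 1 : ℝ) / (1:ℕ)) (hC 1 le_rfl)
  have hCpos : (0:ℝ) < 1 + C := by linarith
  have hlog2 : 0 ≤ Real.log 2 := Real.log_nonneg (by norm_num)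
  have htend : Filter.Tendsto
      (fun N : ℕ => LREP (rbmMarginal (θV N) (θH N) (θVH N)) / ((1 + C) * N) - Real.log 2)
      Filter.atTop Filter.atTop := by
    apply Filter.tendsto_atTop_add_const_right
    have h := hunstable.atTop_div_const hCpos
    convert h using 2 with N
    rw [div_div, mul_comm]
  apply Filter.tendsto_atTop_mono' _ _ htend
  filter_upwards [Filter.eventually_ge_atTop 1] with N hN
  set L := LREP (rbmMarginal (θV N) (θH N) (θVH N)) with hL
  set Lj := LREP (rbmJoint (θV N) (θH N) (θVH N)) with hLj
  have hN1 : (1:ℝ) ≤ (N:ℝ) := by exact_mod_cast hN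
  have hNpos : (0:ℝ) < N := by linarith
  have hD : (0:ℝ) < (N:ℝ) + NH N := by positivity
  have hNHle : (NH N : ℝ) ≤ C * N := by
    have := hC N hN
    rwa [div_le_iff₀ hNpos] at this
  have hDle : (N:ℝ) + NH N ≤ (1 + C) * N := by nlinarith
  have hL0 : 0 ≤ L := LREP_nonneg _ (fun x =>
    Finset.sum_pos (fun h _ => joint_pos _ _ _ _) Finset.univ_nonempty)
  have hkey : L ≤ Lj + NH N * Real.log 2 := key _ _ _
  have hNHD : (NH N : ℝ) ≤ (N:ℝ) + NH N := by linarith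
  calc L / ((1 + C) * N) - Real.log 2
      ≤ L / ((N:ℝ) + NH N) - (NH N * Real.log 2) / ((N:ℝ) + NH N) := by
        apply sub_le_sub
        · gcongr
        · rw [div_le_iff₀ hD]; nlinarith
    _ = (L - NH N * Real.log 2) / ((N:ℝ) + NH N) := (sub_div _ _ _).symm
    _ ≤ Lj / ((N:ℝ) + NH N) := by gcongr; linarith
end

section
/- Let X be a fixed finite set and let P_N and Q_N, N >= 1, be two FOES model sequences on X^N satisfying condition PSR, with P_N S-unstable and LREP(P_N) > 0 for every N. Define the standardized log-likelihood L_N(x) = ( log P_N(x) - min_{y in X^N} log P_N(y) ) / LREP(P_N) for x in X^N. Then: (a) the P_N-expectation sum_{x in X^N} P_N(x) * L_N(x) converges to 1 as N tends to infinity, and for every delta > 0, P_N({ x : L_N(x) > 1 - delta }) converges to 1; (b) the Q_N-expectation sum_{x in X^N} Q_N(x) * (1 - L_N(x)) converges to 1 as N tends to infinity, and for every delta > 0, Q_N({ x : 1 - L_N(x) > 1 - delta }) converges to 1. (Theorem 3) -/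
/-- The standardized log-likelihood
`L(x) = (log P(x) - min_y log P(y)) / LREP(P)`. -/
noncomputable def stdLL {S : Type*} [Fintype S] [Nonempty S] (P : S → ℝ) (x : S) : ℝ :=
  (Real.log (P x) -
      Finset.univ.inf' Finset.univ_nonempty fun y => Real.log (P y)) / LREP P

open Finset Filter Topology Real

section Entropy

variable {S : Type*} [Fintype S] [Nonempty S] {R : S → ℝ}

theorem sum_negMulLog_le_log_card (hR : ∀ x, 0 ≤ R x) (hRs : ∑ x, R x = 1) :
    ∑ x, negMulLog (R x) ≤ log (Fintype.card S) := by
  set n : ℝ := (Fintype.card S : ℝ)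
  have hn : 0 < n := Nat.cast_pos.2 Fintype.card_pos
  have jensen := concaveOn_negMulLog.le_map_sum (t := univ) (w := fun _ => n⁻¹) (p := R)
    (fun _ _ => (inv_pos.2 hn).le) (by simp [n]) (fun x _ => Set.mem_Ici.2 (hR x))
  have hrhs : negMulLog n⁻¹ = n⁻¹ * log n := by simp [negMulLog, log_inv]
  simp only [smul_eq_mul, ← mul_sum, hRs, mul_one, hrhs] at jensen
  exact le_of_mul_le_mul_left jensen (inv_pos.2 hn)

theorem sum_mul_log_sup'_sub_log_le_log_card (hR : ∀ x, 0 < R x) (hRs : ∑ x, R x = 1) :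
    ∑ x, R x * (log (univ.sup' univ_nonempty R) - log (R x)) ≤ log (Fintype.card S) := by
  have hsup_le : univ.sup' univ_nonempty R ≤ 1 :=
    sup'_le _ _ fun x _ => hRs ▸ single_le_sum (fun y _ => (hR y).le) (mem_univ x)
  have hsup_pos : 0 < univ.sup' univ_nonempty R :=
    (lt_sup'_iff _).2 ⟨Classical.arbitrary S, mem_univ _, hR _⟩
  calc ∑ x, R x * (log (univ.sup' univ_nonempty R) - log (R x))
      = log (univ.sup' univ_nonempty R) + ∑ x, negMulLog (R x) := by
        simp only [mul_sub, sum_sub_distrib, ← sum_mul, hRs, negMulLog, neg_mul, sum_neg_distrib]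
        ring
    _ ≤ 0 + log (Fintype.card S) :=
        add_le_add (log_nonpos hsup_pos.le hsup_le)
          (sum_negMulLog_le_log_card (fun x => (hR x).le) hRs)
    _ = log (Fintype.card S) := zero_add _

end Entropy

section StandardizedLogLikelihood

variable {S : Type*} [Fintype S] [Nonempty S] {P Q : S → ℝ}

theorem inf'_univ_pos (hP : ∀ x, 0 < P x) : 0 < univ.inf' univ_nonempty P :=
  (lt_inf'_iff _).2 fun x _ => hP x

theorem sup'_univ_pos (hP : ∀ x, 0 < P x) : 0 < univ.sup' univ_nonempty P :=
  (lt_sup'_iff _).2 ⟨Classical.arbitrary S, mem_univ _, hP _⟩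

theorem inf'_univ_log (hP : ∀ x, 0 < P x) :
    (univ.inf' univ_nonempty fun y => log (P y)) = log (univ.inf' univ_nonempty P) := by
  obtain ⟨x, -, hx⟩ := exists_mem_eq_inf' univ_nonempty P
  refine le_antisymm (hx ▸ inf'_le _ (mem_univ x)) (le_inf' _ _ fun y _ => ?_)
  exact log_le_log (inf'_univ_pos hP) (inf'_le _ (mem_univ y))

theorem LREP_eq_log_sub_log (hP : ∀ x, 0 < P x) :
    LREP P = log (univ.sup' univ_nonempty P) - log (univ.inf' univ_nonempty P) :=
  log_div (sup'_univ_pos hP).ne' (inf'_univ_pos hP).ne'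

theorem LREP_nonneg_s19 (hP : ∀ x, 0 < P x) : 0 ≤ LREP P := by
  rw [LREP_eq_log_sub_log hP, sub_nonneg]
  exact log_le_log (inf'_univ_pos hP)
    ((inf'_le _ (mem_univ (Classical.arbitrary S))).trans (le_sup' _ (mem_univ _)))

theorem stdLL_eq (hP : ∀ x, 0 < P x) (x : S) :
    stdLL P x = (log (P x) - log (univ.inf' univ_nonempty P)) / LREP P := by
  rw [stdLL, inf'_univ_log hP]

theorem one_sub_stdLL (hP : ∀ x, 0 < P x) (hL : LREP P ≠ 0) (x : S) :
    1 - stdLL P x = (log (univ.sup' univ_nonempty P) - log (P x)) / LREP P := by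
  rw [stdLL_eq hP, eq_div_iff hL, sub_mul, div_mul_cancel₀ _ hL, LREP_eq_log_sub_log hP]
  ring

theorem stdLL_nonneg (hP : ∀ x, 0 < P x) (x : S) : 0 ≤ stdLL P x := by
  rw [stdLL_eq hP]
  exact div_nonneg (sub_nonneg.2 (log_le_log (inf'_univ_pos hP) (inf'_le _ (mem_univ x))))
    (LREP_nonneg_s19 hP)

theorem stdLL_le_one (hP : ∀ x, 0 < P x) (hL : 0 < LREP P) (x : S) : stdLL P x ≤ 1 := by
  rw [← sub_nonneg, one_sub_stdLL hP hL.ne']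
  exact div_nonneg (sub_nonneg.2 (log_le_log (hP x) (le_sup' _ (mem_univ x)))) hL.le

theorem sum_mul_one_sub_stdLL_le (hP : ∀ x, 0 < P x) (hPs : ∑ x, P x = 1) (hL : 0 < LREP P) :
    ∑ x, P x * (1 - stdLL P x) ≤ log (Fintype.card S) / LREP P := by
  simp only [one_sub_stdLL hP hL.ne', mul_div_assoc', ← sum_div]
  exact div_le_div_of_nonneg_right (sum_mul_log_sup'_sub_log_le_log_card hP hPs) hL.le

theorem stdLL_le_of_mul_eq_const (hP : ∀ x, 0 < P x) (hQ : ∀ x, 0 < Q x) {c : ℝ}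
    (hPQ : ∀ x, P x * Q x = c) (x : S) :
    stdLL P x ≤ (log (univ.sup' univ_nonempty Q) - log (Q x)) / LREP P := by
  obtain ⟨x₀, -, hx₀⟩ := exists_mem_eq_inf' univ_nonempty P
  have hm := inf'_univ_pos hP
  have hprod : P x * Q x ≤ univ.inf' univ_nonempty P * univ.sup' univ_nonempty Q := by
    rw [hPQ x, ← hPQ x₀, hx₀]
    exact mul_le_mul_of_nonneg_left (le_sup' Q (mem_univ x₀)) (hx₀ ▸ hm).le
  have hlog := log_le_log (mul_pos (hP x) (hQ x)) hprod
  rw [log_mul (hP x).ne' (hQ x).ne', log_mul hm.ne' (sup'_univ_pos hQ).ne'] at hlog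
  rw [stdLL_eq hP]
  exact div_le_div_of_nonneg_right (by linarith) (LREP_nonneg_s19 hP)

theorem sum_mul_stdLL_le_of_mul_eq_const (hP : ∀ x, 0 < P x) (hQ : ∀ x, 0 < Q x)
    (hQs : ∑ x, Q x = 1) {c : ℝ} (hPQ : ∀ x, P x * Q x = c) :
    ∑ x, Q x * stdLL P x ≤ log (Fintype.card S) / LREP P :=
  calc ∑ x, Q x * stdLL P x
      ≤ ∑ x, Q x * ((log (univ.sup' univ_nonempty Q) - log (Q x)) / LREP P) :=
        sum_le_sum fun x _ =>
          mul_le_mul_of_nonneg_left (stdLL_le_of_mul_eq_const hP hQ hPQ x) (hQ x).le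
    _ = (∑ x, Q x * (log (univ.sup' univ_nonempty Q) - log (Q x))) / LREP P := by
        simp only [mul_div_assoc', sum_div]
    _ ≤ log (Fintype.card S) / LREP P :=
        div_le_div_of_nonneg_right (sum_mul_log_sup'_sub_log_le_log_card hQ hQs)
          (LREP_nonneg_s19 hP)

end StandardizedLogLikelihood

section Concentration

theorem sum_mul_eq_one_sub_sum_mul_one_sub {S : Type*} [Fintype S] {R f : S → ℝ}
    (hRs : ∑ x, R x = 1) : ∑ x, R x * f x = 1 - ∑ x, R x * (1 - f x) := by
  simp only [mul_sub, mul_one, sum_sub_distrib, hRs, sub_sub_cancel]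

theorem mul_sum_filter_le_sum_mul_one_sub {S : Type*} [Fintype S] {R f : S → ℝ}
    (hR : ∀ x, 0 ≤ R x) (hf : ∀ x, f x ≤ 1) (δ : ℝ) :
    δ * ∑ x ∈ univ.filter (fun x => f x ≤ 1 - δ), R x ≤ ∑ x, R x * (1 - f x) := by
  rw [mul_sum]
  calc ∑ x ∈ univ.filter (fun x => f x ≤ 1 - δ), δ * R x
      ≤ ∑ x ∈ univ.filter (fun x => f x ≤ 1 - δ), R x * (1 - f x) :=
        sum_le_sum fun x hx => by
          rw [mul_comm]
          exact mul_le_mul_of_nonneg_left (by linarith [(mem_filter.1 hx).2]) (hR x)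
    _ ≤ ∑ x, R x * (1 - f x) :=
        sum_le_sum_of_subset_of_nonneg (filter_subset _ _)
          fun x _ _ => mul_nonneg (hR x) (sub_nonneg.2 (hf x))

variable {ι : Type*} {S : ι → Type*} [∀ i, Fintype (S i)] {l : Filter ι} {R f : ∀ i, S i → ℝ}
  {b : ι → ℝ}

theorem tendsto_sum_mul_and_sum_filter_of_sum_mul_one_sub_le
    (hR : ∀ᶠ i in l, ∀ x, 0 ≤ R i x) (hRs : ∀ᶠ i in l, ∑ x, R i x = 1)
    (hf : ∀ᶠ i in l, ∀ x, f i x ≤ 1) (hb : Tendsto b l (𝓝 0))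
    (hfb : ∀ᶠ i in l, ∑ x, R i x * (1 - f i x) ≤ b i) :
    Tendsto (fun i => ∑ x, R i x * f i x) l (𝓝 1) ∧
      ∀ δ : ℝ, 0 < δ →
        Tendsto (fun i => ∑ x ∈ univ.filter (fun x => f i x > 1 - δ), R i x) l (𝓝 1) := by
  have hdefect : Tendsto (fun i => ∑ x, R i x * (1 - f i x)) l (𝓝 0) := by
    refine squeeze_zero' ?_ hfb hb
    filter_upwards [hR, hf] with i hRi hfi
    exact sum_nonneg fun x _ => mul_nonneg (hRi x) (sub_nonneg.2 (hfi x))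
  refine ⟨?_, fun δ hδ => ?_⟩
  · refine (by simpa using tendsto_const_nhds.sub hdefect : Tendsto _ l (𝓝 (1 : ℝ))).congr' ?_
    filter_upwards [hRs] with i hRsi
    exact (sum_mul_eq_one_sub_sum_mul_one_sub hRsi).symm
  · have htail :
        Tendsto (fun i => ∑ x ∈ univ.filter (fun x => f i x ≤ 1 - δ), R i x) l (𝓝 0) := by
      refine squeeze_zero' ?_ ?_ (by simpa using hdefect.div_const δ)
      · filter_upwards [hR] with i hRi
        exact sum_nonneg fun x _ => hRi x
      · filter_upwards [hR, hf] with i hRi hfi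
        rw [le_div_iff₀' hδ]
        exact mul_sum_filter_le_sum_mul_one_sub hRi hfi δ
    refine (by simpa using tendsto_const_nhds.sub htail : Tendsto _ l (𝓝 (1 : ℝ))).congr' ?_
    filter_upwards [hRs] with i hRsi
    have hsplit := sum_filter_add_sum_filter_not univ (fun x => f i x > 1 - δ) (R i)
    simp only [gt_iff_lt, not_lt] at hsplit
    linarith

end Concentration

theorem tendsto_log_card_pi_div {X : Type*} [Fintype X] {L : ℕ → ℝ}
    (hL : Tendsto (fun N : ℕ => L N / N) atTop atTop) :
    Tendsto (fun N : ℕ => log (Fintype.card (Fin N → X)) / L N) atTop (𝓝 0) := by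
  have hcard (N : ℕ) :
      log (Fintype.card (Fin N → X)) / L N = log (Fintype.card X) * (L N / N)⁻¹ := by
    rw [Fintype.card_fun, Fintype.card_fin, Nat.cast_pow, log_pow, inv_div]
    ring
  simpa only [hcard, mul_zero, Pi.inv_apply] using
    hL.inv_tendsto_atTop.const_mul (log (Fintype.card X))

open scoped Classical in
/-- Theorem 3: for an S-unstable FOES model sequence `P` with a companion sequence `Q`
satisfying condition PSR, the standardized log-likelihood converges to 1 in `P`-expectation
and in `P`-probability, while `1 - stdLL` converges to 1 in `Q`-expectation and in
`Q`-probability. -/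
theorem theorem3 {X : Type*} [Fintype X] [Nonempty X]
    (P Q : ∀ N : ℕ, (Fin N → X) → ℝ)
    (hPpos : ∀ N : ℕ, 1 ≤ N → ∀ x, 0 < P N x)
    (hPsum : ∀ N : ℕ, 1 ≤ N → ∑ x, P N x = 1)
    (hQpos : ∀ N : ℕ, 1 ≤ N → ∀ x, 0 < Q N x)
    (hQsum : ∀ N : ℕ, 1 ≤ N → ∑ x, Q N x = 1)
    (hPSR : ∀ N : ℕ, 1 ≤ N → ∀ x : Fin N → X,
      P N x * Q N x =
        Finset.univ.sup' Finset.univ_nonempty (P N) *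
          Finset.univ.inf' Finset.univ_nonempty (Q N))
    (hunstable : Filter.Tendsto (fun N : ℕ => LREP (P N) / (N : ℝ))
      Filter.atTop Filter.atTop)
    (hLREPpos : ∀ N : ℕ, 1 ≤ N → 0 < LREP (P N)) :
    ((Filter.Tendsto (fun N : ℕ => ∑ x, P N x * stdLL (P N) x)
        Filter.atTop (nhds 1) ∧
      ∀ δ : ℝ, 0 < δ →
        Filter.Tendsto
          (fun N : ℕ => ∑ x ∈ Finset.univ.filter (fun x => stdLL (P N) x > 1 - δ), P N x)
          Filter.atTop (nhds 1)) ∧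
     (Filter.Tendsto (fun N : ℕ => ∑ x, Q N x * (1 - stdLL (P N) x))
        Filter.atTop (nhds 1) ∧
      ∀ δ : ℝ, 0 < δ →
        Filter.Tendsto
          (fun N : ℕ => ∑ x ∈ Finset.univ.filter (fun x => 1 - stdLL (P N) x > 1 - δ), Q N x)
          Filter.atTop (nhds 1))) := by
  have hN : ∀ᶠ N in atTop, 1 ≤ N := eventually_ge_atTop 1
  have hb := tendsto_log_card_pi_div (X := X) hunstable
  constructor
  · refine tendsto_sum_mul_and_sum_filter_of_sum_mul_one_sub_le (f := fun N => stdLL (P N))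
      ?_ ?_ ?_ hb ?_ <;> filter_upwards [hN] with N hN
    · exact fun x => (hPpos N hN x).le
    · exact hPsum N hN
    · exact stdLL_le_one (hPpos N hN) (hLREPpos N hN)
    · exact sum_mul_one_sub_stdLL_le (hPpos N hN) (hPsum N hN) (hLREPpos N hN)
  · refine tendsto_sum_mul_and_sum_filter_of_sum_mul_one_sub_le
      (f := fun N x => 1 - stdLL (P N) x) ?_ ?_ ?_ hb ?_ <;> filter_upwards [hN] with N hN
    · exact fun x => (hQpos N hN x).le
    · exact hQsum N hN
    · exact fun x => sub_le_self 1 (stdLL_nonneg (hPpos N hN) x)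
    · simp only [sub_sub_cancel]
      exact sum_mul_stdLL_le_of_mul_eq_const (hPpos N hN) (hQpos N hN) (hQsum N hN) (hPSR N hN)
end
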